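/- Assume hypotheses (EC), (BB), (ET). Then the map τ ↦ M^τ is strictly monotonically increasing and continuous from [0,T) to [M^0,∞), and lim_{τ→T⁻} M^τ = ∞. -/

import Mathlib

open MeasureTheory Set Filter Topology

noncomputable section

variable {H : Type*} [NormedAddCommGroup H] [InnerProductSpace ℂ H] [CompleteSpace H]
  [SecondCountableTopology H]

/-- `U` is a strongly continuous one-parameter group of unitary operators on `H`,
abstracting the Schrödinger group `e^{-iΔt}`. -/
def IsUnitaryGroup (U : ℝ → H →L[ℂ] H) : Prop :=
  U 0 = ContinuousLinearMap.id ℂ H ∧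
  (∀ s t : ℝ, U (s + t) = (U s).comp (U t)) ∧
  (∀ (t : ℝ) (x : H), ‖U t x‖ = ‖x‖) ∧
  ∀ x : H, Continuous fun t : ℝ => U t x

/-- `B` is a nonzero orthogonal projection on `H`, abstracting multiplication by `χ_ω`. -/
def IsOrthProj (B : H →L[ℂ] H) : Prop :=
  B ≠ 0 ∧ B.comp B = B ∧ ∀ x y : H, (inner ℂ (B x) y : ℂ) = inner ℂ x (B y)

/-- Membership in `L∞((a,b);H)`. -/
def MemLinfty (u : ℝ → H) (a b : ℝ) : Prop :=
  AEStronglyMeasurable u (volume : Measure ℝ) ∧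
    ∃ c : ℝ, ∀ᵐ t : ℝ ∂volume, t ∈ Ioo a b → ‖u t‖ ≤ c

/-- Membership in `L∞((0,∞);H)`. -/
def MemLinftyInf (u : ℝ → H) : Prop :=
  AEStronglyMeasurable u (volume : Measure ℝ) ∧
    ∃ c : ℝ, ∀ᵐ t : ℝ ∂volume, t ∈ Ioi (0 : ℝ) → ‖u t‖ ≤ c

/-- The `L∞((a,b);H)` norm of `u`. -/
def supNorm (u : ℝ → H) (a b : ℝ) : ℝ :=
  sInf {c : ℝ | 0 ≤ c ∧ ∀ᵐ t : ℝ ∂volume, t ∈ Ioo a b → ‖u t‖ ≤ c}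

/-- `stateT U B T τ u y₀ = y(T; χ_{(τ,T)}u, y₀)`, the mild solution at time `T` of the
controlled Schrödinger equation with initial state `y₀`, the control acting on `(τ,T)`:
`y(T) = U(T)y₀ + ∫_τ^T U(T-s) B u(s) ds`.  The free state at time `t` starting from `y₀`
with control `u` active from time `0` is `stateT U B t 0 u y₀`. -/
def stateT (U : ℝ → H →L[ℂ] H) (B : H →L[ℂ] H) (T τ : ℝ) (u : ℝ → H) (y₀ : H) : H :=
  U T y₀ + ∫ s in Ioo τ T, U (T - s) (B (u s))

/-- Hypothesis (EC): `L∞`-exact controllability with cost. -/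
def EC (U : ℝ → H →L[ℂ] H) (B : H →L[ℂ] H) : Prop :=
  ∀ τ : ℝ, 0 < τ → ∃ C : ℝ, 0 < C ∧ ∀ y₀ z : H, ∃ u : ℝ → H,
    AEStronglyMeasurable u (volume : Measure ℝ) ∧
    (∀ᵐ t : ℝ ∂volume, t ∈ Ioo 0 τ → ‖u t‖ ≤ C * ‖z - U τ y₀‖) ∧
    stateT U B τ 0 u y₀ = z

/-- Hypothesis (UC): unique continuation. -/
def UC (U : ℝ → H →L[ℂ] H) (B : H →L[ℂ] H) : Prop :=
  ∀ η : H, η ≠ 0 → volume {t : ℝ | B (U t η) = 0} = 0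

/-- The admissible set `U_M` of the minimal time problem `(TOCP)_M`. -/
def UMset (U : ℝ → H →L[ℂ] H) (B : H →L[ℂ] H) (y₀ : H) (M : ℝ) : Set (ℝ → H) :=
  {u | MemLinftyInf u ∧ (∀ᵐ t : ℝ ∂volume, t ∈ Ioi (0 : ℝ) → ‖u t‖ ≤ M) ∧
    ∃ s : ℝ, 0 < s ∧ stateT U B s 0 u y₀ = 0}

/-- The minimal time `T_M` of `(TOCP)_M`. -/
def Tmin (U : ℝ → H →L[ℂ] H) (B : H →L[ℂ] H) (y₀ : H) (M : ℝ) : ℝ :=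
  sInf {s : ℝ | 0 < s ∧ ∃ u ∈ UMset U B y₀ M, stateT U B s 0 u y₀ = 0}

/-- The admissible set `V_T` of the minimal norm problem `(NOCP)_T`. -/
def VTset (U : ℝ → H →L[ℂ] H) (B : H →L[ℂ] H) (y₀ : H) (T : ℝ) : Set (ℝ → H) :=
  {v | MemLinfty v 0 T ∧ stateT U B T 0 v y₀ = 0}

/-- The minimal norm `M_T` of `(NOCP)_T`. -/
def Mmin (U : ℝ → H →L[ℂ] H) (B : H →L[ℂ] H) (y₀ : H) (T : ℝ) : ℝ :=
  sInf ((fun v : ℝ → H => supNorm v 0 T) '' VTset U B y₀ T)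

/-- Hypothesis (BB): bang-bang property of the minimal time problems. -/
def BB (U : ℝ → H →L[ℂ] H) (B : H →L[ℂ] H) : Prop :=
  ∀ y₀ : H, y₀ ≠ 0 → ∀ M : ℝ, 0 < M → ∀ u ∈ UMset U B y₀ M,
    stateT U B (Tmin U B y₀ M) 0 u y₀ = 0 →
    ∀ᵐ t : ℝ ∂volume, t ∈ Ioo 0 (Tmin U B y₀ M) → ‖u t‖ = M

/-- Hypothesis (ET): existence of optimal controls for the minimal time problems. -/
def ET (U : ℝ → H →L[ℂ] H) (B : H →L[ℂ] H) : Prop :=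
  ∀ y₀ : H, y₀ ≠ 0 → ∀ M : ℝ, 0 < M →
    ∃ u ∈ UMset U B y₀ M, stateT U B (Tmin U B y₀ M) 0 u y₀ = 0

/-- The admissible set `U_{M,τ}`. -/
def UadmSet (M τ T : ℝ) : Set (ℝ → H) :=
  {u | MemLinfty u 0 T ∧ ∀ᵐ t : ℝ ∂volume, t ∈ Ioo τ T → ‖u t‖ ≤ M}

/-- The optimal distance `r(M,τ)` of the optimal target problem `(OP)^{M,τ}`. -/
def rOP (U : ℝ → H →L[ℂ] H) (B : H →L[ℂ] H) (y₀ z_d : H) (T M τ : ℝ) : ℝ :=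
  sInf ((fun u : ℝ → H => ‖stateT U B T τ u y₀ - z_d‖) '' UadmSet M τ T)

/-- `u` is an optimal control to `(OP)^{M,τ}`. -/
def IsOptOP (U : ℝ → H →L[ℂ] H) (B : H →L[ℂ] H) (y₀ z_d : H) (T M τ : ℝ) (u : ℝ → H) :
    Prop :=
  u ∈ UadmSet M τ T ∧ ‖stateT U B T τ u y₀ - z_d‖ = rOP U B y₀ z_d T M τ

/-- `M^τ`, the minimal norm for exact steering to the target `z_d`. -/
def Mtau (U : ℝ → H →L[ℂ] H) (B : H →L[ℂ] H) (y₀ z_d : H) (T τ : ℝ) : ℝ :=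
  sInf ((fun u : ℝ → H => supNorm u τ T) ''
    {u : ℝ → H | MemLinfty u 0 T ∧ stateT U B T τ u y₀ = z_d})

/-- The admissible set `W_{τ,r}` of the optimal norm problem `(NP)^{τ,r}`. -/
def WadmSet (U : ℝ → H →L[ℂ] H) (B : H →L[ℂ] H) (y₀ z_d : H) (T τ r : ℝ) :
    Set (ℝ → H) :=
  {u | MemLinfty u 0 T ∧ ‖stateT U B T τ u y₀ - z_d‖ ≤ r}

/-- The optimal norm `M(τ,r)` of `(NP)^{τ,r}`. -/
def MNP (U : ℝ → H →L[ℂ] H) (B : H →L[ℂ] H) (y₀ z_d : H) (T τ r : ℝ) : ℝ :=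
  sInf ((fun u : ℝ → H => supNorm u τ T) '' WadmSet U B y₀ z_d T τ r)

/-- `u` is an optimal control to `(NP)^{τ,r}`. -/
def IsOptNP (U : ℝ → H →L[ℂ] H) (B : H →L[ℂ] H) (y₀ z_d : H) (T τ r : ℝ) (u : ℝ → H) :
    Prop :=
  u ∈ WadmSet U B y₀ z_d T τ r ∧ supNorm u τ T = MNP U B y₀ z_d T τ r

/-- The admissible set `V_{M,r}` of the second type optimal time problem `(TP)^{M,r}`. -/
def VadmSet (U : ℝ → H →L[ℂ] H) (B : H →L[ℂ] H) (y₀ z_d : H) (T M r : ℝ) :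
    Set (ℝ → H) :=
  {u | ∃ τ : ℝ, τ ∈ Ico (0 : ℝ) T ∧ u ∈ UadmSet M τ T ∧
    ‖stateT U B T τ u y₀ - z_d‖ ≤ r}

/-- `τ_{M,r}(u)`. -/
def tauOf (U : ℝ → H →L[ℂ] H) (B : H →L[ℂ] H) (y₀ z_d : H) (T r : ℝ) (u : ℝ → H) : ℝ :=
  sSup {τ : ℝ | τ ∈ Ico (0 : ℝ) T ∧ ‖stateT U B T τ u y₀ - z_d‖ ≤ r}

/-- The optimal time `τ(M,r)` of `(TP)^{M,r}`. -/
def tauTP (U : ℝ → H →L[ℂ] H) (B : H →L[ℂ] H) (y₀ z_d : H) (T M r : ℝ) : ℝ :=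
  sSup (tauOf U B y₀ z_d T r '' VadmSet U B y₀ z_d T M r)

/-- `u` is an optimal control to `(TP)^{M,r}`. -/
def IsOptTP (U : ℝ → H →L[ℂ] H) (B : H →L[ℂ] H) (y₀ z_d : H) (T M r : ℝ) (u : ℝ → H) :
    Prop :=
  u ∈ VadmSet U B y₀ z_d T M r ∧
    ‖stateT U B T (tauTP U B y₀ z_d T M r) u y₀ - z_d‖ ≤ r

/-- The adjoint state `φ*(t) = U(t-T)(z_d - y(T; χ_{(τ,T)}u, y₀))`. -/
def adjState (U : ℝ → H →L[ℂ] H) (B : H →L[ℂ] H) (y₀ z_d : H) (T τ : ℝ) (u : ℝ → H)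
    (t : ℝ) : H :=
  U (t - T) (z_d - stateT U B T τ u y₀)

/-!
Read backwards in time, steering `y₀` to `z_d` on `(τ, T)` is steering `x₀ = U T y₀ - z_d` to
rest in time `T - τ` under the group `t ↦ U (-t)`, so `M^τ = M_{T-τ}`, the minimal norm of that
null-controllability problem. The map `S ↦ M_S` is strictly decreasing: a control for time `S₁`
damped by a factor `1 - θ` leaves the state `θ • U (-S₁) x₀`, which (EC) steers to rest in the
remaining time `S₂ - S₁` at a cost that, for `θ` small, stays below `(1 - θ) M_{S₁}`. By (ET) and
(BB), `M_{T_M} = M` for every `M > 0`, so this decreasing map is onto `(0, ∞)` and hence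
continuous. Finally `‖x₀‖ ≤ ‖B‖ S M_S`, so `M_S → ∞` as `S → 0`.
-/

variable {E : Type*} [NormedAddCommGroup E]

lemma ae_mem_Ioo_comp_sub_left {P : ℝ → Prop} {a b : ℝ} (c : ℝ)
    (h : ∀ᵐ s : ℝ, s ∈ Ioo a b → P s) : ∀ᵐ s : ℝ, s ∈ Ioo (c - b) (c - a) → P (c - s) := by
  filter_upwards [(Measure.measurePreserving_sub_left volume c).quasiMeasurePreserving.ae h]
    with s hs hmem
  exact hs ⟨by linarith [hmem.2], by linarith [hmem.1]⟩

lemma ae_mem_Ioo_comp_sub_right {P : ℝ → Prop} {a b : ℝ} (c : ℝ)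
    (h : ∀ᵐ s : ℝ, s ∈ Ioo a b → P s) : ∀ᵐ s : ℝ, s ∈ Ioo (a + c) (b + c) → P (s - c) := by
  filter_upwards [(measurePreserving_sub_right volume c).quasiMeasurePreserving.ae h]
    with s hs hmem
  exact hs ⟨by linarith [hmem.1], by linarith [hmem.2]⟩

lemma tendsto_const_sub_nhdsLT (T : ℝ) : Tendsto (fun τ => T - τ) (𝓝[<] T) (𝓝[>] 0) :=
  tendsto_nhdsWithin_of_tendsto_nhds_of_eventually_within _
    (((continuous_const.sub continuous_id).tendsto' T 0 (sub_self T)).mono_left nhdsWithin_le_nhds)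
    (eventually_nhdsWithin_of_forall fun _ hτ => mem_Ioi.2 (sub_pos.2 hτ))

lemma ae_norm_indicator_le {u : ℝ → E} {s : Set ℝ} {c : ℝ} (hc : 0 ≤ c)
    (h : ∀ᵐ t : ℝ, t ∈ s → ‖u t‖ ≤ c) : ∀ᵐ t : ℝ, ‖s.indicator u t‖ ≤ c := by
  filter_upwards [h] with t ht
  by_cases hts : t ∈ s
  · simpa [hts] using ht hts
  · simpa [hts] using hc

section SupNorm

variable {a b c : ℝ} {𝒮 : Set (ℝ → E)}

lemma supNorm_nonneg (u : ℝ → E) (a b : ℝ) : 0 ≤ supNorm u a b :=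
  Real.sInf_nonneg fun _ hc => hc.1

lemma supNorm_le {u : ℝ → E} (hc : 0 ≤ c) (h : ∀ᵐ t : ℝ, t ∈ Ioo a b → ‖u t‖ ≤ c) :
    supNorm u a b ≤ c :=
  csInf_le ⟨0, fun _ hx => hx.1⟩ ⟨hc, h⟩

lemma sInf_supNorm_le {u : ℝ → E} (hu : u ∈ 𝒮) (hc : 0 ≤ c)
    (h : ∀ᵐ t : ℝ, t ∈ Ioo a b → ‖u t‖ ≤ c) : sInf ((fun u => supNorm u a b) '' 𝒮) ≤ c := by
  have hbdd : BddBelow ((fun u => supNorm u a b) '' 𝒮) :=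
    ⟨0, by rintro _ ⟨v, -, rfl⟩; exact supNorm_nonneg v a b⟩
  exact (csInf_le hbdd ⟨u, hu, rfl⟩).trans (supNorm_le hc h)

lemma le_sInf_supNorm {m : ℝ} (hne : 𝒮.Nonempty)
    (hbdd : ∀ u ∈ 𝒮, ∃ c, ∀ᵐ t : ℝ, t ∈ Ioo a b → ‖u t‖ ≤ c)
    (h : ∀ u ∈ 𝒮, ∀ c, 0 ≤ c → (∀ᵐ t : ℝ, t ∈ Ioo a b → ‖u t‖ ≤ c) → m ≤ c) :
    m ≤ sInf ((fun u => supNorm u a b) '' 𝒮) := by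
  refine le_csInf (hne.image _) ?_
  rintro _ ⟨u, hu, rfl⟩
  obtain ⟨c, hc⟩ := hbdd u hu
  refine le_csInf ⟨max c 0, le_max_right _ _, ?_⟩ fun c' hc' => h u hu c' hc'.1 hc'.2
  filter_upwards [hc] with t ht hmem using (ht hmem).trans (le_max_left _ _)

end SupNorm

variable [InnerProductSpace ℂ E]

namespace IsUnitaryGroup

variable {U : ℝ → E →L[ℂ] E}

lemma norm_map (hU : IsUnitaryGroup U) (t : ℝ) (x : E) : ‖U t x‖ = ‖x‖ :=
  hU.2.2.1 t x

lemma add_apply (hU : IsUnitaryGroup U) (s t : ℝ) (x : E) : U (s + t) x = U s (U t x) := by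
  rw [hU.2.1 s t]; rfl

lemma apply_eq_zero_iff (hU : IsUnitaryGroup U) (t : ℝ) (x : E) : U t x = 0 ↔ x = 0 := by
  rw [← norm_eq_zero, hU.norm_map, norm_eq_zero]

lemma reverse (hU : IsUnitaryGroup U) : IsUnitaryGroup fun t => U (-t) := by
  refine ⟨by simpa using hU.1, fun s t => ?_, fun t => hU.norm_map (-t),
    fun x => (hU.2.2.2 x).comp continuous_neg⟩
  simp only [neg_add]
  exact hU.2.1 (-s) (-t)

lemma continuous_uncurry (hU : IsUnitaryGroup U) : Continuous fun p : ℝ × E => U p.1 p.2 := by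
  refine continuous_iff_continuousAt.2 fun ⟨t₀, x₀⟩ => ?_
  have hsmall : Tendsto (fun p : ℝ × E => U p.1 (p.2 - x₀)) (𝓝 (t₀, x₀)) (𝓝 0) :=
    squeeze_zero_norm (fun p => (hU.norm_map _ _).le)
      ((continuous_snd.sub continuous_const).norm.tendsto' _ _ (by simp))
  have hfixed := ((hU.2.2.2 x₀).comp continuous_fst).tendsto (t₀, x₀)
  simpa [ContinuousAt, map_sub] using hsmall.add hfixed

def toContinuousLinearEquiv (hU : IsUnitaryGroup U) (t : ℝ) : E ≃L[ℂ] E :=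
  .equivOfInverse' (U t) (U (-t)) (by rw [← hU.2.1, add_neg_cancel, hU.1])
    (by rw [← hU.2.1, neg_add_cancel, hU.1])

lemma integral_comp_comm (hU : IsUnitaryGroup U) (t : ℝ) (f : ℝ → E) (μ : Measure ℝ) :
    ∫ s, U t (f s) ∂μ = U t (∫ s, f s ∂μ) :=
  (hU.toContinuousLinearEquiv t).integral_comp_comm f

lemma intervalIntegral_comp_comm (hU : IsUnitaryGroup U) (t : ℝ) (f : ℝ → E) (a b : ℝ) :
    ∫ s in a..b, U t (f s) = U t (∫ s in a..b, f s) := by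
  simp only [intervalIntegral, hU.integral_comp_comm, map_sub]

end IsUnitaryGroup

section State

variable {W : ℝ → E →L[ℂ] E} {B : E →L[ℂ] E} {T τ c : ℝ} {u v : ℝ → E} {x : E}

lemma stateT_congr (h : EqOn u v (Ioo τ T)) (x : E) : stateT W B T τ u x = stateT W B T τ v x := by
  rw [stateT, stateT, setIntegral_congr_fun measurableSet_Ioo fun s hs => by rw [h hs]]

lemma stateT_of_le (h : T ≤ τ) (u : ℝ → E) (x : E) : stateT W B T τ u x = W T x := by
  simp [stateT, Ioo_eq_empty (not_lt.2 h)]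

lemma stateT_eq_intervalIntegral (h : τ ≤ T) (u : ℝ → E) (x : E) :
    stateT W B T τ u x = W T x + ∫ s in τ..T, W (T - s) (B (u s)) := by
  rw [stateT, intervalIntegral.integral_of_le h, integral_Ioc_eq_integral_Ioo]

lemma stateT_smul_of_stateT_eq_zero (hv : stateT W B T τ v x = 0) (a : ℂ) :
    stateT W B T τ (fun s => a • v s) x = (1 - a) • W T x := by
  have hI : ∫ s in Ioo τ T, W (T - s) (B (v s)) = -W T x := eq_neg_of_add_eq_zero_right hv
  simp only [stateT, map_smul, integral_smul]
  rw [hI, smul_neg, sub_smul, one_smul, sub_eq_add_neg]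

lemma norm_stateT_sub_le (hW : IsUnitaryGroup W) (h : τ ≤ T)
    (hbd : ∀ᵐ s : ℝ, s ∈ Ioo τ T → ‖u s‖ ≤ c) :
    ‖stateT W B T τ u x - W T x‖ ≤ ‖B‖ * c * (T - τ) := by
  rw [stateT, add_sub_cancel_left, ← Real.volume_real_Ioo_of_le h]
  refine norm_setIntegral_le_of_norm_le_const_ae' measure_Ioo_lt_top ?_
  filter_upwards [hbd] with s hs hmem
  rw [hW.norm_map]
  exact (B.le_opNorm _).trans (mul_le_mul_of_nonneg_left (hs hmem) (norm_nonneg B))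

lemma norm_le_of_stateT_eq_zero (hW : IsUnitaryGroup W) (h : τ ≤ T) (hv : stateT W B T τ v x = 0)
    (hbd : ∀ᵐ s : ℝ, s ∈ Ioo τ T → ‖v s‖ ≤ c) : ‖x‖ ≤ ‖B‖ * c * (T - τ) := by
  simpa [hv, hW.norm_map] using norm_stateT_sub_le (B := B) (x := x) hW h hbd

lemma intervalIntegrable_stateIntegrand (hW : IsUnitaryGroup W) {a b : ℝ} (hab : a ≤ b)
    (hu : AEStronglyMeasurable u) (hbd : ∀ᵐ s : ℝ, s ∈ Ioo a b → ‖u s‖ ≤ c) (T : ℝ) :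
    IntervalIntegrable (fun s => W (T - s) (B (u s))) volume a b := by
  rw [intervalIntegrable_iff_integrableOn_Ioo_of_le hab]
  refine Integrable.mono' (g := fun _ => ‖B‖ * c) (integrableOn_const measure_Ioo_lt_top.ne) ?_ ?_
  · exact (hW.continuous_uncurry.comp_aestronglyMeasurable
      ((continuous_const.sub continuous_id).aestronglyMeasurable.prodMk
        (B.continuous.comp_aestronglyMeasurable hu))).restrict
  · rw [ae_restrict_iff' measurableSet_Ioo]
    filter_upwards [hbd] with s hs hmem
    rw [hW.norm_map]
    exact (B.le_opNorm _).trans (mul_le_mul_of_nonneg_left (hs hmem) (norm_nonneg B))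

lemma stateT_eq_stateT_stateT (hW : IsUnitaryGroup W) {S₁ S₂ : ℝ} (h₁ : 0 ≤ S₁) (h₁₂ : S₁ ≤ S₂)
    (hint : IntervalIntegrable (fun s => W (S₂ - s) (B (u s))) volume 0 S₂) (x : E) :
    stateT W B S₂ 0 u x =
      stateT W B (S₂ - S₁) 0 (fun s => u (s + S₁)) (stateT W B S₁ 0 u x) := by
  have hS₁ : S₁ ∈ uIcc 0 S₂ := by rw [uIcc_of_le (h₁.trans h₁₂)]; exact ⟨h₁, h₁₂⟩
  rw [stateT_eq_intervalIntegral (h₁.trans h₁₂), stateT_eq_intervalIntegral (sub_nonneg.2 h₁₂),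
    stateT_eq_intervalIntegral h₁, map_add, ← hW.add_apply, sub_add_cancel,
    ← hW.intervalIntegral_comp_comm, add_assoc,
    ← intervalIntegral.integral_add_adjacent_intervals (b := S₁)
      (hint.mono_set (uIcc_subset_uIcc_left hS₁)) (hint.mono_set (uIcc_subset_uIcc_right hS₁))]
  congr 2
  · refine intervalIntegral.integral_congr fun s _ => ?_
    rw [← hW.add_apply, sub_add_sub_cancel]
  · have hshift := intervalIntegral.integral_comp_add_right
      (fun s => W (S₂ - s) (B (u s))) S₁ (a := 0) (b := S₂ - S₁)
    simp only [zero_add, sub_add_cancel] at hshift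
    rw [← hshift]
    refine intervalIntegral.integral_congr fun s _ => ?_
    rw [sub_sub, add_comm S₁]

end State

section MinNorm

variable {W : ℝ → E →L[ℂ] E} {B : E →L[ℂ] E} {x : E} {S c : ℝ} {v : ℝ → E}

lemma VTset_nonempty (hEC : EC W B) (hS : 0 < S) (x : E) : (VTset W B x S).Nonempty := by
  obtain ⟨C, -, hC⟩ := hEC S hS
  obtain ⟨v, hv, hbd, hstate⟩ := hC x 0
  exact ⟨v, ⟨hv, _, hbd⟩, hstate⟩

lemma Mmin_le (hv : v ∈ VTset W B x S) (hc : 0 ≤ c)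
    (hbd : ∀ᵐ t : ℝ, t ∈ Ioo 0 S → ‖v t‖ ≤ c) : Mmin W B x S ≤ c :=
  sInf_supNorm_le hv hc hbd

lemma le_Mmin {m : ℝ} (hEC : EC W B) (hS : 0 < S)
    (h : ∀ v ∈ VTset W B x S, ∀ c, 0 ≤ c → (∀ᵐ t : ℝ, t ∈ Ioo 0 S → ‖v t‖ ≤ c) → m ≤ c) :
    m ≤ Mmin W B x S :=
  le_sInf_supNorm (VTset_nonempty hEC hS x) (fun _ hv => hv.1.2) h

lemma norm_div_le_Mmin (hW : IsUnitaryGroup W) (hEC : EC W B) (hB : B ≠ 0) (hS : 0 < S)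
    (x : E) : ‖x‖ / (‖B‖ * S) ≤ Mmin W B x S :=
  le_Mmin hEC hS fun _ hv c _ hbd => by
    rw [div_le_iff₀ (mul_pos (norm_pos_iff.2 hB) hS)]
    linarith [norm_le_of_stateT_eq_zero hW hS.le hv.2 hbd]

lemma Mmin_pos (hW : IsUnitaryGroup W) (hEC : EC W B) (hB : B ≠ 0) (hS : 0 < S) (hx : x ≠ 0) :
    0 < Mmin W B x S :=
  (div_pos (norm_pos_iff.2 hx) (mul_pos (norm_pos_iff.2 hB) hS)).trans_le
    (norm_div_le_Mmin hW hEC hB hS x)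

lemma tendsto_Mmin_nhdsGT_zero (hW : IsUnitaryGroup W) (hEC : EC W B) (hB : B ≠ 0)
    (hx : x ≠ 0) : Tendsto (Mmin W B x) (𝓝[>] 0) atTop := by
  refine tendsto_atTop_mono' _ ?_ (tendsto_inv_nhdsGT_zero.const_mul_atTop
    (div_pos (norm_pos_iff.2 hx) (norm_pos_iff.2 hB)))
  filter_upwards [self_mem_nhdsWithin] with S (hS : 0 < S)
  rw [← div_eq_mul_inv, div_div]
  exact norm_div_le_Mmin hW hEC hB hS x

/-- The control is `v` damped by `1 - θ` up to time `S₁`, which leaves the state `θ • W S₁ x`,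
followed by `w`. -/
lemma Mmin_le_max_of_concat (hW : IsUnitaryGroup W) {S₁ S₂ θ c' : ℝ} (h₁ : 0 ≤ S₁)
    (h₁₂ : S₁ ≤ S₂) (hθ : θ ≤ 1) (hv : v ∈ VTset W B x S₁)
    (hvbd : ∀ᵐ t : ℝ, t ∈ Ioo 0 S₁ → ‖v t‖ ≤ c) {w : ℝ → E}
    (hw : w ∈ VTset W B ((θ : ℂ) • W S₁ x) (S₂ - S₁)) (hc' : 0 ≤ c')
    (hwbd : ∀ᵐ t : ℝ, t ∈ Ioo 0 (S₂ - S₁) → ‖w t‖ ≤ c') :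
    Mmin W B x S₂ ≤ max ((1 - θ) * c) c' := by
  classical
  set g : ℝ → E := (Iic S₁).piecewise (fun s => ((1 - θ : ℝ) : ℂ) • v s) (fun s => w (s - S₁))
    with hg
  have hgm : AEStronglyMeasurable g :=
    AEStronglyMeasurable.piecewise measurableSet_Iic (hv.1.1.const_smul _).restrict
      (hw.1.1.comp_quasiMeasurePreserving
        (measurePreserving_sub_right volume S₁).quasiMeasurePreserving).restrict
  have hgbd : ∀ᵐ t : ℝ, t ∈ Ioo 0 S₂ → ‖g t‖ ≤ max ((1 - θ) * c) c' := by
    filter_upwards [hvbd, ae_mem_Ioo_comp_sub_right S₁ hwbd, volume.ae_ne S₁]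
      with t hvt hwt hne hmem
    rcases lt_or_gt_of_ne hne with hlt | hgt
    · rw [hg, piecewise_eq_of_mem _ _ _ (mem_Iic.2 hlt.le), norm_smul, Complex.norm_real,
        Real.norm_of_nonneg (sub_nonneg.2 hθ)]
      exact (mul_le_mul_of_nonneg_left (hvt ⟨hmem.1, hlt⟩) (sub_nonneg.2 hθ)).trans
        (le_max_left _ _)
    · rw [hg, piecewise_eq_of_notMem _ _ _ (notMem_Iic.2 hgt)]
      exact (hwt ⟨by linarith, by linarith [hmem.2]⟩).trans (le_max_right _ _)
  have hstate : stateT W B S₂ 0 g x = 0 := by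
    rw [stateT_eq_stateT_stateT hW h₁ h₁₂
        (intervalIntegrable_stateIntegrand hW (h₁.trans h₁₂) hgm hgbd S₂),
      stateT_congr (T := S₁) (u := g) (v := fun s => ((1 - θ : ℝ) : ℂ) • v s)
        (fun s hs => piecewise_eq_of_mem _ _ _ (mem_Iic.2 hs.2.le)),
      stateT_smul_of_stateT_eq_zero hv.2, Complex.ofReal_sub, Complex.ofReal_one,
      sub_sub_cancel, stateT_congr (v := w) fun s hs => ?_]
    · exact hw.2
    · simp only [g, piecewise_eq_of_notMem _ _ _ (show s + S₁ ∉ Iic S₁ by simpa using hs.1),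
        add_sub_cancel_right]
  exact Mmin_le ⟨⟨hgm, _, hgbd⟩, hstate⟩ (le_max_of_le_right hc') hgbd

lemma Mmin_strictAntiOn (hW : IsUnitaryGroup W) (hEC : EC W B) (hB : B ≠ 0) (hx : x ≠ 0) :
    StrictAntiOn (Mmin W B x) (Ioi 0) := by
  intro S₁ (h₁ : 0 < S₁) S₂ _ h₁₂
  set m := Mmin W B x S₁
  have hm : 0 < m := Mmin_pos hW hEC hB h₁ hx
  obtain ⟨C, hC, hctrl⟩ := hEC (S₂ - S₁) (sub_pos.2 h₁₂)
  set K := C * ‖x‖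
  have hK : 0 < K := mul_pos hC (norm_pos_iff.2 hx)
  -- `θ` balances the cost `θ * K` of the final steering against the damped cost `(1 - θ) * m`
  set θ := m / (K + m)
  have hθ0 : 0 < θ := div_pos hm (by positivity)
  have hθ1 : θ < 1 := (div_lt_one (by positivity)).2 (by linarith)
  have hθK : θ * K = (1 - θ) * m := by simp only [θ]; field_simp; ring
  have hle : Mmin W B x S₂ ≤ (1 - θ) * m := by
    suffices Mmin W B x S₂ / (1 - θ) ≤ m by rwa [div_le_iff₀ (sub_pos.2 hθ1), mul_comm] at this
    refine le_Mmin hEC h₁ fun v hv c hc hbd => ?_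
    obtain ⟨w, hwm, hwbd, hwstate⟩ := hctrl ((θ : ℂ) • W S₁ x) 0
    have hcost : C * ‖0 - W (S₂ - S₁) ((θ : ℂ) • W S₁ x)‖ = θ * K := by
      rw [zero_sub, norm_neg, hW.norm_map, norm_smul, Complex.norm_real,
        Real.norm_of_nonneg hθ0.le, hW.norm_map]
      ring
    rw [hcost] at hwbd
    have hconcat := Mmin_le_max_of_concat hW h₁.le h₁₂.le hθ1.le hv hbd
      ⟨⟨hwm, _, hwbd⟩, hwstate⟩ (by positivity) hwbd
    rw [max_eq_left (hθK ▸ mul_le_mul_of_nonneg_left (Mmin_le hv hc hbd) (sub_nonneg.2 hθ1.le))]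
      at hconcat
    rwa [div_le_iff₀ (sub_pos.2 hθ1), mul_comm]
  linarith [mul_pos hθ0 hm]

lemma Tmin_pos (hW : IsUnitaryGroup W) (hET : ET W B) (hx : x ≠ 0) {M : ℝ} (hM : 0 < M) :
    0 < Tmin W B x M := by
  obtain ⟨u, -, hu⟩ := hET x hx M hM
  by_contra! h
  rw [stateT_of_le h, hW.apply_eq_zero_iff] at hu
  exact hx hu

lemma Mmin_Tmin (hW : IsUnitaryGroup W) (hEC : EC W B) (hBB : BB W B) (hET : ET W B)
    (hx : x ≠ 0) {M : ℝ} (hM : 0 < M) : Mmin W B x (Tmin W B x M) = M := by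
  obtain ⟨u, hu, hstate⟩ := hET x hx M hM
  have hT := Tmin_pos hW hET hx hM
  have hubd : ∀ᵐ t : ℝ, t ∈ Ioo 0 (Tmin W B x M) → ‖u t‖ ≤ M :=
    hu.2.1.mono fun t ht hmem => ht hmem.1
  refine le_antisymm (Mmin_le ⟨⟨hu.1.1, M, hubd⟩, hstate⟩ hM.le hubd)
    (le_Mmin hEC hT fun v hv c hc hbd => ?_)
  by_contra! hcM
  -- extended by zero, `v` would be a minimal time control of norm `< M`, contradicting (BB)
  set v' := (Ioo 0 (Tmin W B x M)).indicator v
  have hv'bd : ∀ᵐ t : ℝ, ‖v' t‖ ≤ c := ae_norm_indicator_le hc hbd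
  have hv'state : stateT W B (Tmin W B x M) 0 v' x = 0 := by
    rw [stateT_congr fun s hs => indicator_of_mem hs v]
    exact hv.2
  have hv' : v' ∈ UMset W B x M :=
    ⟨⟨hv.1.1.indicator measurableSet_Ioo, c, hv'bd.mono fun _ h _ => h⟩,
      hv'bd.mono fun _ h _ => h.trans hcM.le, _, hT, hv'state⟩
  have hnull : ∀ᵐ t : ℝ, t ∉ Ioo 0 (Tmin W B x M) := by
    filter_upwards [hBB x hx M hM v' hv' hv'state, hv'bd] with t hbang hsmall hmem
    exact (hbang hmem ▸ hsmall).not_gt hcM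
  rw [← measure_eq_zero_iff_ae_notMem, Real.volume_Ioo, ENNReal.ofReal_eq_zero] at hnull
  linarith

lemma Mmin_continuousOn (hW : IsUnitaryGroup W) (hEC : EC W B) (hBB : BB W B) (hET : ET W B)
    (hB : B ≠ 0) (hx : x ≠ 0) : ContinuousOn (Mmin W B x) (Ioi 0) := by
  intro S (hS : 0 < S)
  have hanti := (Mmin_strictAntiOn hW hEC hB hx).antitoneOn
  -- by `Mmin_Tmin` the antitone map `Mmin` is onto `(0, ∞)`, so it has no jumps
  have hneg : ContinuousAt (fun S => -Mmin W B x S) S := by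
    refine continuousAt_of_monotoneOn_of_image_mem_nhds (s := Ioi 0)
      (fun a ha b hb hab => neg_le_neg (hanti ha hb hab)) (Ioi_mem_nhds hS)
      (mem_of_superset (Iio_mem_nhds (neg_neg_of_pos (Mmin_pos hW hEC hB hS hx))) ?_)
    intro y (hy : y < 0)
    exact ⟨Tmin W B x (-y), Tmin_pos hW hET hx (neg_pos.2 hy),
      by simp [Mmin_Tmin hW hEC hBB hET hx (neg_pos.2 hy)]⟩
  simpa using hneg.fun_neg.continuousWithinAt

end MinNorm

section Reverse

variable {U : ℝ → E →L[ℂ] E} {B : E →L[ℂ] E} {T τ c : ℝ} {y₀ z : E}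

lemma stateT_reverse (hU : IsUnitaryGroup U) (h : τ ≤ T) (u : ℝ → E) (y₀ z : E) :
    stateT (fun t => U (-t)) B (T - τ) 0 (fun σ => u (T - σ)) (U T y₀ - z) =
      U (τ - T) (stateT U B T τ u y₀ - z) := by
  have hintegrand : ∀ σ, U (-(T - τ - σ)) (B (u (T - σ))) =
      U (τ - T) (U (T - (T - σ)) (B (u (T - σ)))) := fun σ => by
    rw [← hU.add_apply]; ring_nf
  rw [stateT_eq_intervalIntegral (sub_nonneg.2 h), stateT_eq_intervalIntegral h]
  simp only [hintegrand]
  rw [hU.intervalIntegral_comp_comm,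
    intervalIntegral.integral_comp_sub_left (fun s => U (T - s) (B (u s))), sub_sub_cancel,
    sub_zero, neg_sub, ← map_add]
  congr 1
  abel

lemma reverse_mem_VTset (hU : IsUnitaryGroup U) (h : τ ≤ T) {u : ℝ → E}
    (hu : AEStronglyMeasurable u) (hbd : ∀ᵐ s : ℝ, s ∈ Ioo τ T → ‖u s‖ ≤ c)
    (hstate : stateT U B T τ u y₀ = z) :
    (fun σ => u (T - σ)) ∈ VTset (fun t => U (-t)) B (U T y₀ - z) (T - τ) ∧
      ∀ᵐ σ : ℝ, σ ∈ Ioo 0 (T - τ) → ‖u (T - σ)‖ ≤ c := by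
  have hbd' : ∀ᵐ σ : ℝ, σ ∈ Ioo 0 (T - τ) → ‖u (T - σ)‖ ≤ c := by
    simpa using ae_mem_Ioo_comp_sub_left T hbd
  refine ⟨⟨⟨hu.comp_quasiMeasurePreserving
    (Measure.measurePreserving_sub_left volume T).quasiMeasurePreserving, c, hbd'⟩, ?_⟩, hbd'⟩
  rw [stateT_reverse hU h, hstate, sub_self, map_zero]

lemma exists_steering_of_mem_VTset_reverse (hU : IsUnitaryGroup U) (h : τ ≤ T) {v : ℝ → E}
    (hv : v ∈ VTset (fun t => U (-t)) B (U T y₀ - z) (T - τ)) (hc : 0 ≤ c)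
    (hbd : ∀ᵐ σ : ℝ, σ ∈ Ioo 0 (T - τ) → ‖v σ‖ ≤ c) :
    ∃ u, (MemLinfty u 0 T ∧ stateT U B T τ u y₀ = z) ∧ ∀ᵐ s : ℝ, s ∈ Ioo τ T → ‖u s‖ ≤ c := by
  set u := (Ioo τ T).indicator fun s => v (T - s)
  have hubd : ∀ᵐ s : ℝ, ‖u s‖ ≤ c :=
    ae_norm_indicator_le hc (by simpa using ae_mem_Ioo_comp_sub_left T hbd)
  have hstate : stateT U B T τ u y₀ = z := by
    have hrev := stateT_reverse (B := B) hU h (fun s => v (T - s)) y₀ z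
    simp only [sub_sub_cancel] at hrev
    rw [stateT_congr fun s hs => indicator_of_mem hs _, ← sub_eq_zero,
      ← hU.apply_eq_zero_iff (τ - T), ← hrev]
    exact hv.2
  refine ⟨u, ⟨⟨AEStronglyMeasurable.indicator ?_ measurableSet_Ioo, c,
    hubd.mono fun _ h _ => h⟩, hstate⟩, hubd.mono fun _ h _ => h⟩
  exact hv.1.1.comp_quasiMeasurePreserving
    (Measure.measurePreserving_sub_left volume T).quasiMeasurePreserving

lemma Mtau_eq_Mmin (hU : IsUnitaryGroup U) (hEC : EC (fun t => U (-t)) B) (hτ : 0 ≤ τ)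
    (hτT : τ < T) (y₀ z : E) :
    Mtau U B y₀ z T τ = Mmin (fun t => U (-t)) B (U T y₀ - z) (T - τ) := by
  obtain ⟨v₀, hv₀⟩ := VTset_nonempty hEC (sub_pos.2 hτT) (U T y₀ - z)
  obtain ⟨c₀, hc₀⟩ := hv₀.1.2
  obtain ⟨u₀, hu₀, -⟩ := exists_steering_of_mem_VTset_reverse hU hτT.le hv₀ (le_max_right c₀ 0)
    (hc₀.mono fun _ h hmem => (h hmem).trans (le_max_left c₀ 0))
  apply le_antisymm
  · refine le_sInf_supNorm ⟨v₀, hv₀⟩ (fun _ hv => hv.1.2) fun v hv c hc hbd => ?_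
    obtain ⟨u, hu, hubd⟩ := exists_steering_of_mem_VTset_reverse hU hτT.le hv hc hbd
    exact sInf_supNorm_le hu hc hubd
  · refine le_sInf_supNorm ⟨u₀, hu₀⟩ (fun u hu => ?_) fun u hu c hc hbd => ?_
    · obtain ⟨c, hc⟩ := hu.1.2
      exact ⟨c, hc.mono fun _ h hmem => h (Ioo_subset_Ioo_left hτ hmem)⟩
    · obtain ⟨hv, hvbd⟩ := reverse_mem_VTset hU hτT.le hu.1.1 hbd hu.2
      exact Mmin_le hv hc hvbd

end Reverse

theorem Mtau_map_properties_general
    (U : ℝ → H →L[ℂ] H) (B : H →L[ℂ] H) (hU : IsUnitaryGroup U) (hB : IsOrthProj B)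
    (hECrev : EC (fun t => U (-t)) B)
    (hBBrev : BB (fun t => U (-t)) B)
    (hETrev : ET (fun t => U (-t)) B)
    (T : ℝ) (hT : 0 < T) (y₀ z_d : H) (hrT : 0 < ‖U T y₀ - z_d‖) :
    StrictMonoOn (Mtau U B y₀ z_d T) (Ico (0 : ℝ) T) ∧
    ContinuousOn (Mtau U B y₀ z_d T) (Ico (0 : ℝ) T) ∧
    (∀ τ ∈ Ico (0 : ℝ) T, Mtau U B y₀ z_d T 0 ≤ Mtau U B y₀ z_d T τ) ∧
    Tendsto (Mtau U B y₀ z_d T) (𝓝[<] T) atTop := by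
  have hV := hU.reverse
  have hx₀ : U T y₀ - z_d ≠ 0 := norm_pos_iff.1 hrT
  set N := Mmin (fun t => U (-t)) B (U T y₀ - z_d)
  have hMtau : EqOn (Mtau U B y₀ z_d T) (fun τ => N (T - τ)) (Ico 0 T) :=
    fun τ hτ => Mtau_eq_Mmin hU hECrev hτ.1 hτ.2 y₀ z_d
  have hgap : MapsTo (fun τ => T - τ) (Ico 0 T) (Ioi 0) := fun τ hτ => sub_pos.2 hτ.2
  have hmono : StrictMonoOn (Mtau U B y₀ z_d T) (Ico 0 T) := fun a ha b hb hab => by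
    rw [hMtau ha, hMtau hb]
    exact Mmin_strictAntiOn hV hECrev hB.1 hx₀ (hgap hb) (hgap ha) (sub_lt_sub_left hab T)
  refine ⟨hmono, ?_, fun τ hτ => hmono.monotoneOn (left_mem_Ico.2 (hτ.1.trans_lt hτ.2)) hτ hτ.1,
    ?_⟩
  · exact ((Mmin_continuousOn hV hECrev hBBrev hETrev hB.1 hx₀).comp
      (continuousOn_const.sub continuousOn_id) hgap).congr hMtau
  · exact ((tendsto_Mmin_nhdsGT_zero hV hECrev hB.1 hx₀).comp (tendsto_const_sub_nhdsLT T)).congr'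
      (eventuallyEq_of_mem (Ioo_mem_nhdsLT hT) fun τ hτ => (hMtau (Ioo_subset_Ico_self hτ)).symm)

theorem Mtau_map_properties
    (U : ℝ → H →L[ℂ] H) (B : H →L[ℂ] H) (hU : IsUnitaryGroup U) (hB : IsOrthProj B)
    (hEC : EC U B) (hECrev : EC (fun t => U (-t)) B)
    (hBB : BB U B) (hBBrev : BB (fun t => U (-t)) B)
    (hET : ET U B) (hETrev : ET (fun t => U (-t)) B)
    (T : ℝ) (hT : 0 < T) (y₀ z_d : H) (hrT : 0 < ‖U T y₀ - z_d‖) :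
    StrictMonoOn (Mtau U B y₀ z_d T) (Ico (0 : ℝ) T) ∧
    ContinuousOn (Mtau U B y₀ z_d T) (Ico (0 : ℝ) T) ∧
    (∀ τ ∈ Ico (0 : ℝ) T, Mtau U B y₀ z_d T 0 ≤ Mtau U B y₀ z_d T τ) ∧
    Tendsto (Mtau U B y₀ z_d T) (𝓝[<] T) atTop :=
  Mtau_map_properties_general U B hU hB hECrev hBBrev hETrev T hT y₀ z_d hrT
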